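/- arXiv:1512.03117 — 2 statements merged into one kernel-verified Lean document; each statement's English description precedes it below -/
import Mathlib

section
/- Let H be Hermitian, w ∈ ℂ_+, G = (H − w)^{-1}, and for an index k let G^{(k)} be the resolvent of the principal submatrix of H with row and column k removed (embedded with zeros in row/column k). Then for all i, j ≠ k with G_{kk} ≠ 0: G_{ij} − G^{(k)}_{ij} = G_{ik} G_{kj} / G_{kk}. -/
open Matrix
open scoped ComplexOrder

lemma aux_unit {n : ℕ} (H : Matrix (Fin n) (Fin n) ℂ) (hH : H.IsHermitian) (w : ℂ)
    (hw : w.im ≠ 0) : IsUnit (H - w • (1 : Matrix (Fin n) (Fin n) ℂ)) := by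
  rw [Matrix.isUnit_iff_isUnit_det, isUnit_iff_ne_zero]
  intro hdet
  obtain ⟨v, hv, hv0⟩ := (Matrix.exists_mulVec_eq_zero_iff).2 hdet
  have hHv : H *ᵥ v = w • v := by
    have := hv0
    rw [Matrix.sub_mulVec, sub_eq_zero, Matrix.smul_mulVec, Matrix.one_mulVec] at this
    exact this
  set t : ℂ := star v ⬝ᵥ v with ht
  have htne : t ≠ 0 := fun h => hv (dotProduct_star_self_eq_zero.mp h)
  have htreal : star t = t := by
    simp [ht, dotProduct, star_sum, mul_comm]
  have hc : star (star v ⬝ᵥ (H *ᵥ v)) = star v ⬝ᵥ (H *ᵥ v) := by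
    symm
    conv_lhs => rw [star_dotProduct]
    congr 1
    rw [Matrix.star_mulVec, hH.eq, ← Matrix.dotProduct_mulVec]
  rw [hHv, dotProduct_smul, smul_eq_mul, star_mul', htreal] at hc
  have hz : (star w - w) * t = 0 := by rw [sub_mul, hc, ← ht, sub_self]
  rcases mul_eq_zero.mp hz with h | h
  · have : (starRingEnd ℂ) w = w := sub_eq_zero.mp h
    exact hw (Complex.conj_eq_iff_im.mp this)
  · exact htne h

theorem stmt_18 {N : ℕ} (H : Matrix (Fin (N + 1)) (Fin (N + 1)) ℂ)
    (hH : H.IsHermitian) (w : ℂ) (hw : 0 < w.im) (k : Fin (N + 1))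
    (G : Matrix (Fin (N + 1)) (Fin (N + 1)) ℂ)
    (hG : G = (H - w • (1 : Matrix (Fin (N + 1)) (Fin (N + 1)) ℂ))⁻¹)
    (hGkk : G k k ≠ 0) (i j : Fin N) :
    G (k.succAbove i) (k.succAbove j) -
        ((H.submatrix k.succAbove k.succAbove - w • (1 : Matrix (Fin N) (Fin N) ℂ))⁻¹) i j =
      G (k.succAbove i) k * G k (k.succAbove j) / G k k := by
  set A : Matrix (Fin (N + 1)) (Fin (N + 1)) ℂ := H - w • 1 with hA
  have hAu : IsUnit A := aux_unit H hH w (ne_of_gt hw)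
  have hAG : A * G = 1 := by
    rw [hG]; exact Matrix.mul_nonsing_inv A ((Matrix.isUnit_iff_isUnit_det A).mp hAu)
  set B : Matrix (Fin N) (Fin N) ℂ := H.submatrix k.succAbove k.succAbove - w • 1 with hB
  have hBA : ∀ a b : Fin N, B a b = A (k.succAbove a) (k.succAbove b) := by
    intro a b
    simp [hB, hA, Matrix.one_apply, Matrix.sub_apply, Matrix.smul_apply,
      (Fin.succAbove_right_injective (p := k)).eq_iff]
  have key : ∀ (a : Fin N) (x : Fin (N + 1)),
      ∑ l : Fin N, A (k.succAbove a) (k.succAbove l) * G (k.succAbove l) x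
        = (if k.succAbove a = x then 1 else 0) - A (k.succAbove a) k * G k x := by
    intro a x
    have h1 : ∑ l, A (k.succAbove a) l * G l x = if k.succAbove a = x then 1 else 0 := by
      have := congrFun (congrFun hAG (k.succAbove a)) x
      rwa [Matrix.mul_apply, Matrix.one_apply] at this
    rw [Fin.sum_univ_succAbove (fun l => A (k.succAbove a) l * G l x) k] at h1
    linear_combination h1
  set M : Matrix (Fin N) (Fin N) ℂ :=
    Matrix.of fun a b => G (k.succAbove a) (k.succAbove b) -
      G (k.succAbove a) k * G k (k.succAbove b) / G k k with hM
  have hBM : B * M = 1 := by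
    ext a b
    rw [Matrix.mul_apply, Matrix.one_apply]
    have expand : ∀ l : Fin N, B a l * M l b
        = A (k.succAbove a) (k.succAbove l) * G (k.succAbove l) (k.succAbove b)
          - A (k.succAbove a) (k.succAbove l) * G (k.succAbove l) k
            * (G k (k.succAbove b) / G k k) := by
      intro l
      rw [hBA]
      simp only [hM, Matrix.of_apply]
      ring
    rw [Finset.sum_congr rfl (fun l _ => expand l), Finset.sum_sub_distrib,
      ← Finset.sum_mul, key, key]
    have hak : k.succAbove a ≠ k := Fin.succAbove_ne k a
    have hab : (k.succAbove a = k.succAbove b) ↔ (a = b) :=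
      (Fin.succAbove_right_injective (p := k)).eq_iff
    simp only [if_neg hak, hab]
    field_simp
    by_cases h : a = b <;> simp [h] <;> ring
  have hBinv : B⁻¹ = M := Matrix.inv_eq_right_inv hBM
  rw [hBinv]
  simp only [hM, Matrix.of_apply]
  ring
end

section
/- Let u_1,…,u_N be independent random variables with values in a set A, and f: A^N → ℝ satisfy |f(u) − f(u')| ≤ c_k whenever u and u' differ only in the k-th coordinate. Then for all t ≥ 0, ℙ[|f(U) − 𝔼 f(U)| ≥ t] ≤ 2 exp(−2t² / Σ_k c_k²). -/
open MeasureTheory ProbabilityTheory Real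

lemma hoeffding_core {p : ℝ} (hp0 : 0 ≤ p) (hp1 : p ≤ 1) (h : ℝ) :
    (1 - p) * Real.exp (-p * h) + p * Real.exp ((1 - p) * h) ≤ Real.exp (h ^ 2 / 8) := by
  set D : ℝ → ℝ := fun x => 1 - p + p * Real.exp x with hD
  have hDpos : ∀ x, 0 < D x := by
    intro x
    rcases eq_or_lt_of_le hp0 with h0 | h0
    · simp [hD, ← h0]
    · have := mul_pos h0 (Real.exp_pos x)
      have : 0 ≤ 1 - p := by linarith
      simp only [hD]
      nlinarith [mul_pos h0 (Real.exp_pos x)]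
  have hDderiv : ∀ x, HasDerivAt D (p * Real.exp x) x := by
    intro x
    rw [hD]; exact ((Real.hasDerivAt_exp x).const_mul p).const_add (1 - p)
  -- derivative of g := ψ'
  set g : ℝ → ℝ := fun x => x / 4 + p - p * Real.exp x / D x with hg
  have hgderiv : ∀ x, HasDerivAt g
      (1 / 4 - (p * Real.exp x * D x - p * Real.exp x * (p * Real.exp x)) / D x ^ 2) x := by
    intro x
    have h1 : HasDerivAt (fun x : ℝ => x / 4 + p) (1 / 4) x := by
      simpa using (hasDerivAt_id x).div_const 4 |>.add_const p
    have h2 : HasDerivAt (fun x => p * Real.exp x / D x)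
        ((p * Real.exp x * D x - p * Real.exp x * (p * Real.exp x)) / D x ^ 2) x :=
      ((Real.hasDerivAt_exp x).const_mul p).div (hDderiv x) (hDpos x).ne'
    exact h1.sub h2
  have hgderiv_nonneg : ∀ x, 0 ≤ 1 / 4 -
      (p * Real.exp x * D x - p * Real.exp x * (p * Real.exp x)) / D x ^ 2 := by
    intro x
    have hd : 0 < D x := hDpos x
    have hd2 : (0:ℝ) < D x ^ 2 := by positivity
    have ha : 0 ≤ p * Real.exp x := mul_nonneg hp0 (Real.exp_pos x).le
    have hale : p * Real.exp x ≤ D x := by simp only [hD]; nlinarith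
    rw [sub_nonneg, div_le_iff₀ hd2]
    have key : ∀ a d : ℝ, 0 ≤ a → a ≤ d → a * d - a * a ≤ 1 / 4 * d ^ 2 := by
      intro a d h1 h2
      nlinarith [sq_nonneg (d - 2 * a)]
    have := key (p * Real.exp x) (D x) ha hale
    linarith
  have hgmono : Monotone g := by
    apply monotone_of_deriv_nonneg
    · exact fun x => (hgderiv x).differentiableAt
    · intro x
      rw [(hgderiv x).deriv]
      exact hgderiv_nonneg x
  have hg0 : g 0 = 0 := by simp [hg, hD]
  -- ψ
  set ψ : ℝ → ℝ := fun x => x ^ 2 / 8 + p * x - Real.log (D x) with hψ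
  have hψderiv : ∀ x, HasDerivAt ψ (g x) x := by
    intro x
    have h1 : HasDerivAt (fun x : ℝ => x ^ 2 / 8 + p * x) (x / 4 + p) x := by
      have := ((hasDerivAt_pow 2 x).div_const 8).add ((hasDerivAt_id x).const_mul p)
      refine this.congr_deriv ?_
      norm_num; ring
    have h2 : HasDerivAt (fun x => Real.log (D x)) (p * Real.exp x / D x) x :=
      (hDderiv x).log (hDpos x).ne'
    exact h1.sub h2
  have hψ0 : ψ 0 = 0 := by simp [hψ, hD]
  have hψnonneg : ∀ x, 0 ≤ ψ x := by
    intro x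
    rcases le_or_gt 0 x with hx | hx
    · have hmono : MonotoneOn ψ (Set.Ici 0) := by
        apply monotoneOn_of_deriv_nonneg (convex_Ici 0)
        · exact (Continuous.continuousOn (by
            fun_prop (disch := intro x; exact (hDpos x).ne')))
        · exact fun y _ => (hψderiv y).differentiableAt.differentiableWithinAt
        · intro y hy
          rw [(hψderiv y).deriv]
          have hy0 : 0 ≤ y := le_of_lt (by rwa [interior_Ici, Set.mem_Ioi] at hy)
          calc (0:ℝ) = g 0 := hg0.symm
            _ ≤ g y := hgmono hy0
      have := hmono (Set.self_mem_Ici) (Set.mem_Ici.2 hx) hx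
      linarith [hψ0 ▸ this]
    · have hmono : MonotoneOn g (Set.Iic 0) := hgmono.monotoneOn _
      have hanti : AntitoneOn ψ (Set.Iic 0) := by
        apply antitoneOn_of_deriv_nonpos (convex_Iic 0)
        · exact (Continuous.continuousOn (by
            fun_prop (disch := intro x; exact (hDpos x).ne')))
        · exact fun y _ => (hψderiv y).differentiableAt.differentiableWithinAt
        · intro y hy
          rw [(hψderiv y).deriv]
          have hy0 : y ≤ 0 := le_of_lt (by rwa [interior_Iic, Set.mem_Iio] at hy)
          calc g y ≤ g 0 := hgmono hy0
            _ = 0 := hg0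
      have := hanti (Set.mem_Iic.2 hx.le) (Set.self_mem_Iic) hx.le
      linarith [hψ0 ▸ this]
  -- conclude
  have key : -p * h + Real.log (D h) ≤ h ^ 2 / 8 := by
    have := hψnonneg h
    simp only [hψ] at this
    linarith
  have hid : (1 - p) * Real.exp (-p * h) + p * Real.exp ((1 - p) * h)
      = Real.exp (-p * h) * D h := by
    simp only [hD]
    have e1 : Real.exp (-p * h) * Real.exp h = Real.exp ((1 - p) * h) := by
      rw [← Real.exp_add]; ring_nf
    linear_combination (-p) * e1
  rw [hid]
  calc Real.exp (-p * h) * D h = Real.exp (-p * h + Real.log (D h)) := by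
        rw [Real.exp_add, Real.exp_log (hDpos h)]
    _ ≤ Real.exp (h ^ 2 / 8) := Real.exp_le_exp.2 key

lemma my_integrable_of_bounded {Ω : Type*} [MeasurableSpace Ω] {ν : Measure Ω}
    [IsFiniteMeasure ν] {h : Ω → ℝ} (hm : AEStronglyMeasurable h ν) {C : ℝ}
    (hb : ∀ ω, |h ω| ≤ C) : Integrable h ν :=
  (integrable_const C).mono' hm (Filter.Eventually.of_forall (by simpa using hb))

lemma hoeffding_lemma {Ω : Type*} [MeasurableSpace Ω] (ν : Measure Ω)
    [IsProbabilityMeasure ν] {X : Ω → ℝ} (hX : Measurable X) {a b : ℝ}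
    (hab : ∀ ω, X ω ∈ Set.Icc a b) (s : ℝ) :
    ∫ ω, Real.exp (s * X ω) ∂ν ≤
      Real.exp (s * ∫ ω, X ω ∂ν + s ^ 2 * (b - a) ^ 2 / 8) := by
  have hΩ : Nonempty Ω := by
    rcases MeasureTheory.nonempty_of_measure_ne_zero
      (by simp : ν Set.univ ≠ 0) with ⟨ω, -⟩
    exact ⟨ω⟩
  have hXb : ∀ ω, |X ω| ≤ max |a| |b| := fun ω =>
    abs_le_max_abs_abs (hab ω).1 (hab ω).2
  have hXint : Integrable X ν := my_integrable_of_bounded hX.aestronglyMeasurable hXb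
  set m := ∫ ω, X ω ∂ν with hm
  have hma : a ≤ m := by
    have := integral_mono (integrable_const a) hXint (fun ω => (hab ω).1)
    simpa using this
  have hmb : m ≤ b := by
    have := integral_mono hXint (integrable_const b) (fun ω => (hab ω).2)
    simpa using this
  have hab' : a ≤ b := le_trans hma hmb
  rcases eq_or_lt_of_le hab' with heq | hlt
  · -- a = b : X is constant a
    have hXa : ∀ ω, X ω = a := fun ω =>
      le_antisymm (heq ▸ (hab ω).2) (hab ω).1
    have hmA : m = a := by
      rw [hm]; simp [funext hXa]
    have : (fun ω => Real.exp (s * X ω)) = fun _ => Real.exp (s * a) := by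
      funext ω; rw [hXa ω]
    rw [this, integral_const]
    simp only [probReal_univ, one_smul]
    rw [hmA]
    refine Real.exp_le_exp.2 ?_
    have : (0:ℝ) ≤ s ^ 2 * (b - a) ^ 2 / 8 := by positivity
    linarith
  · -- a < b
    have hba : (0:ℝ) < b - a := by linarith
    set c1 : ℝ := (Real.exp (s * b) - Real.exp (s * a)) / (b - a) with hc1
    set c2 : ℝ := (b * Real.exp (s * a) - a * Real.exp (s * b)) / (b - a) with hc2
    -- pointwise convexity bound : exp (s x) ≤ c1 * x + c2 for x ∈ [a, b]
    have hconv : ∀ x, x ∈ Set.Icc a b → Real.exp (s * x) ≤ c1 * x + c2 := by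
      intro x hx
      have hθ1 : 0 ≤ (b - x) / (b - a) := by
        apply div_nonneg _ hba.le; linarith [hx.2]
      have hθ2 : 0 ≤ (x - a) / (b - a) := by
        apply div_nonneg _ hba.le; linarith [hx.1]
      have hθs : (b - x) / (b - a) + (x - a) / (b - a) = 1 := by
        field_simp; ring
      have := convexOn_exp.2 (Set.mem_univ (s * a)) (Set.mem_univ (s * b)) hθ1 hθ2 hθs
      simp only [smul_eq_mul] at this
      have harg : (b - x) / (b - a) * (s * a) + (x - a) / (b - a) * (s * b) = s * x := by
        field_simp; ring
      rw [harg] at this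
      refine this.trans (le_of_eq ?_)
      rw [hc1, hc2]
      field_simp
      ring
    -- integrate
    have hint1 : Integrable (fun ω => Real.exp (s * X ω)) ν := by
      apply my_integrable_of_bounded
        ((Real.measurable_exp.comp (hX.const_mul s)).aestronglyMeasurable)
        (C := Real.exp (|s| * max |a| |b|))
      intro ω
      simp only [Function.comp_apply]
      rw [abs_of_pos (Real.exp_pos _)]
      apply Real.exp_le_exp.2
      calc s * X ω ≤ |s * X ω| := le_abs_self _
        _ = |s| * |X ω| := abs_mul _ _
        _ ≤ |s| * max |a| |b| := by
            exact mul_le_mul_of_nonneg_left (hXb ω) (abs_nonneg s)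
    have hint2 : Integrable (fun ω => c1 * X ω + c2) ν :=
      (hXint.const_mul c1).add (integrable_const c2)
    have hIle : ∫ ω, Real.exp (s * X ω) ∂ν ≤ c1 * m + c2 := by
      have := integral_mono hint1 hint2 (fun ω => hconv (X ω) (hab ω))
      calc ∫ ω, Real.exp (s * X ω) ∂ν ≤ ∫ ω, (c1 * X ω + c2) ∂ν := this
        _ = c1 * m + c2 := by
            rw [integral_add (hXint.const_mul c1) (integrable_const c2),
              integral_const_mul, integral_const]
            simp [hm]
    refine hIle.trans ?_
    -- algebra : c1 * m + c2 = (1-p) e^{sa} + p e^{sb}, then hoeffding_core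
    set p : ℝ := (m - a) / (b - a) with hp
    have hp0 : 0 ≤ p := div_nonneg (by linarith) hba.le
    have hp1 : p ≤ 1 := by
      rw [hp, div_le_one hba]; linarith
    set hh : ℝ := s * (b - a) with hhh
    have key := hoeffding_core hp0 hp1 hh
    have e1 : s * a = s * m + -p * hh := by
      rw [hp, hhh]; field_simp; ring
    have e2 : s * b = s * m + (1 - p) * hh := by
      rw [hp, hhh]; field_simp; ring
    have ea : Real.exp (s * a) = Real.exp (s * m) * Real.exp (-p * hh) := by
      rw [← Real.exp_add, ← e1]
    have eb : Real.exp (s * b) = Real.exp (s * m) * Real.exp ((1 - p) * hh) := by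
      rw [← Real.exp_add, ← e2]
    have h2' : b - m = (1 - p) * (b - a) := by
      rw [hp]; field_simp; ring
    have h3' : m - a = p * (b - a) := by
      rw [hp]; field_simp
    have algebra : c1 * m + c2 =
        Real.exp (s * m) * ((1 - p) * Real.exp (-p * hh) + p * Real.exp ((1 - p) * hh)) := by
      have h1' : c1 * m + c2 =
          ((b - m) * Real.exp (s * a) + (m - a) * Real.exp (s * b)) / (b - a) := by
        rw [hc1, hc2]; field_simp; ring
      rw [h1', h2', h3', ea, eb]
      field_simp
    rw [algebra]
    have : Real.exp (s * m + s ^ 2 * (b - a) ^ 2 / 8)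
        = Real.exp (s * m) * Real.exp (hh ^ 2 / 8) := by
      rw [← Real.exp_add, hhh]; ring_nf
    rw [this]
    exact mul_le_mul_of_nonneg_left key (Real.exp_pos _).le

lemma abs_sub_le_sum_of_bd {N : ℕ} {A : Type*} {f : (Fin N → A) → ℝ} {c : Fin N → ℝ}
    (hbd : ∀ (k : Fin N) (x y : Fin N → A), (∀ j, j ≠ k → x j = y j) → |f x - f y| ≤ c k)
    (x y : Fin N → A) : |f x - f y| ≤ ∑ k, c k := by
  have aux : ∀ (s : Finset (Fin N)) (x y : Fin N → A),
      (∀ j ∉ s, x j = y j) → |f x - f y| ≤ ∑ k ∈ s, c k := by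
    intro s
    induction s using Finset.induction_on with
    | empty =>
      intro x y hxy
      have : x = y := funext fun j => hxy j (Finset.notMem_empty j)
      simp [this]
    | insert _ _ ha =>
      rename_i a s ih
      intro x y hxy
      set x' := Function.update x a (y a) with hx'
      have h1 : |f x - f x'| ≤ c a := by
        apply hbd a
        intro j hj
        rw [hx', Function.update_of_ne hj]
      have h2 : |f x' - f y| ≤ ∑ k ∈ s, c k := by
        apply ih
        intro j hj
        by_cases hja : j = a
        · subst hja; rw [hx', Function.update_self]
        · rw [hx', Function.update_of_ne hja]
          exact hxy j (by simp [hja, hj])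
      calc |f x - f y| ≤ |f x - f x'| + |f x' - f y| := abs_sub_le _ _ _
        _ ≤ c a + ∑ k ∈ s, c k := add_le_add h1 h2
        _ = ∑ k ∈ insert a s, c k := (Finset.sum_insert ha).symm
  exact aux Finset.univ x y (fun j hj => absurd (Finset.mem_univ j) hj)

lemma mcdiarmid_mgf {A : Type*} [MeasurableSpace A] :
    ∀ (N : ℕ) (ν : Fin N → Measure A), (∀ i, IsProbabilityMeasure (ν i)) →
      ∀ (f : (Fin N → A) → ℝ), Measurable f → ∀ (c : Fin N → ℝ),
      (∀ (k : Fin N) (x y : Fin N → A), (∀ j, j ≠ k → x j = y j) → |f x - f y| ≤ c k) →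
      ∀ s : ℝ,
      ∫ x, Real.exp (s * f x) ∂(Measure.pi ν) ≤
        Real.exp (s * ∫ x, f x ∂(Measure.pi ν) + s ^ 2 * (∑ k, c k ^ 2) / 8) := by
  intro N
  induction N with
  | zero =>
    intro ν hν f hf c hbd s
    haveI : ∀ i, IsProbabilityMeasure (ν i) := hν
    set x₀ : Fin 0 → A := fun j => j.elim0 with hx₀
    have hfc : ∀ x : Fin 0 → A, f x = f x₀ := fun x =>
      congrArg f (funext fun j => j.elim0)
    have h1 : (fun x : Fin 0 → A => Real.exp (s * f x)) = fun _ => Real.exp (s * f x₀) := by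
      funext x; rw [hfc x]
    have h2 : (fun x : Fin 0 → A => f x) = fun _ => f x₀ := funext hfc
    rw [h1, h2, integral_const, integral_const]
    simp
  | succ n ih =>
    intro ν hν f hf c hbd s
    haveI : ∀ i, IsProbabilityMeasure (ν i) := hν
    have hA : Nonempty A := by
      rcases MeasureTheory.nonempty_of_measure_ne_zero
        (by simp : ν 0 Set.univ ≠ 0) with ⟨a, -⟩
      exact ⟨a⟩
    -- setup
    set e := MeasurableEquiv.piFinSuccAbove (fun _ : Fin (n + 1) => A) 0 with he
    set ν' : Fin n → Measure A := fun j => ν ((0 : Fin (n + 1)).succAbove j) with hν'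
    haveI : ∀ j, IsProbabilityMeasure (ν' j) := fun j => hν _
    set σ := ν 0 with hσ
    set τ := Measure.pi ν' with hτ
    set P := Measure.pi ν with hP
    have mp : MeasurePreserving e P (σ.prod τ) :=
      measurePreserving_piFinSuccAbove ν 0
    set F : A × (Fin n → A) → ℝ := fun q => f (e.symm q) with hF
    have hFmeas : Measurable F := hf.comp e.symm.measurable
    -- the symm coordinates
    have hsymm0 : ∀ (a : A) (z : Fin n → A), e.symm (a, z) 0 = a := by
      intro a z
      simp [he, MeasurableEquiv.piFinSuccAbove]
    have hsymmS : ∀ (a : A) (z : Fin n → A) (j : Fin n),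
        e.symm (a, z) ((0 : Fin (n + 1)).succAbove j) = z j := by
      intro a z j
      simp [he, MeasurableEquiv.piFinSuccAbove]
    -- notation / bounds
    obtain ⟨a₀⟩ := hA
    set x₀ : Fin (n + 1) → A := fun _ => a₀ with hx₀
    set S : ℝ := ∑ k, c k with hS
    set B : ℝ := |f x₀| + S with hB
    have hfb : ∀ x, |f x| ≤ B := by
      intro x
      have h1 := abs_sub_le_sum_of_bd hbd x x₀
      have h2 := abs_sub_abs_le_abs_sub (f x) (f x₀)
      rw [hB, hS]
      linarith
    have hFb : ∀ q, |F q| ≤ B := fun q => hfb _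
    have hexpFb : ∀ q, |Real.exp (s * F q)| ≤ Real.exp (|s| * B) := by
      intro q
      rw [abs_of_pos (Real.exp_pos _)]
      apply Real.exp_le_exp.2
      calc s * F q ≤ |s * F q| := le_abs_self _
        _ = |s| * |F q| := abs_mul _ _
        _ ≤ |s| * B := mul_le_mul_of_nonneg_left (hFb q) (abs_nonneg s)
    have hFint : Integrable F (σ.prod τ) :=
      my_integrable_of_bounded hFmeas.aestronglyMeasurable hFb
    have hexpint : Integrable (fun q => Real.exp (s * F q)) (σ.prod τ) :=
      my_integrable_of_bounded
        ((Real.measurable_exp.comp (hFmeas.const_mul s)).aestronglyMeasurable) hexpFb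
    -- transport of integrals from P to the product
    have transport : ∀ h : (Fin (n + 1) → A) → ℝ,
        ∫ q, h (e.symm q) ∂(σ.prod τ) = ∫ x, h x ∂P := by
      intro h
      rw [← MeasurePreserving.integral_comp mp e.measurableEmbedding
        (fun q => h (e.symm q))]
      simp only [MeasurableEquiv.symm_apply_apply]
    -- conditional mean g
    set g : (Fin n → A) → ℝ := fun z => ∫ a, F (a, z) ∂σ with hg
    have hgmeas : Measurable g :=
      (hFmeas.stronglyMeasurable.integral_prod_left').measurable
    have hXzmeas : ∀ z : Fin n → A, Measurable fun a => F (a, z) := fun z =>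
      hFmeas.comp (measurable_id.prodMk measurable_const)
    have hXzint : ∀ z, Integrable (fun a => F (a, z)) σ := fun z =>
      my_integrable_of_bounded (hXzmeas z).aestronglyMeasurable (fun a => hFb _)
    have hgb : ∀ z, |g z| ≤ B := by
      intro z
      have := norm_integral_le_of_norm_le_const (μ := σ) (f := fun a => F (a, z)) (C := B)
        (Filter.Eventually.of_forall fun a => by simpa using hFb (a, z))
      simpa using this
    have hmean : ∫ x, f x ∂P = ∫ z, g z ∂τ := by
      rw [← transport f]
      exact integral_prod_symm F hFint
    -- c-zero oscillation bound in the first coordinate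
    have hosc0 : ∀ (z : Fin n → A) (a a' : A), |F (a, z) - F (a', z)| ≤ c 0 := by
      intro z a a'
      apply hbd 0
      intro j hj
      obtain ⟨k, rfl⟩ := Fin.exists_succAbove_eq hj
      rw [hsymmS, hsymmS]
    -- bounded differences for g
    set c' : Fin n → ℝ := fun j => c ((0 : Fin (n + 1)).succAbove j) with hc'
    have hgbd : ∀ (k : Fin n) (z w : Fin n → A), (∀ j, j ≠ k → z j = w j) →
        |g z - g w| ≤ c' k := by
      intro k z w hzw
      have hdiff : ∀ a : A, |F (a, z) - F (a, w)| ≤ c' k := by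
        intro a
        apply hbd ((0 : Fin (n + 1)).succAbove k)
        intro j hj
        by_cases hj0 : j = 0
        · subst hj0; rw [hsymm0, hsymm0]
        · obtain ⟨l, rfl⟩ := Fin.exists_succAbove_eq hj0
          rw [hsymmS, hsymmS]
          apply hzw
          intro hlk
          exact hj (by rw [hlk])
      have hsub : g z - g w = ∫ a, (F (a, z) - F (a, w)) ∂σ :=
        (integral_sub (hXzint z) (hXzint w)).symm
      rw [hsub]
      have := norm_integral_le_of_norm_le_const (μ := σ)
        (f := fun a => F (a, z) - F (a, w)) (C := c' k)
        (Filter.Eventually.of_forall fun a => by simpa using hdiff a)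
      simpa using this
    -- per-z Hoeffding step
    have hstep : ∀ z : Fin n → A,
        ∫ a, Real.exp (s * F (a, z)) ∂σ ≤
          Real.exp (s * g z + s ^ 2 * c 0 ^ 2 / 8) := by
      intro z
      set X : A → ℝ := fun a => F (a, z) with hX
      have hosc : ∀ a a', X a - X a' ≤ c 0 := by
        intro a a'
        have h1 := hosc0 z a a'
        have h2 := le_abs_self (F (a, z) - F (a', z))
        simp only [hX]
        linarith
      have hbdd : BddBelow (Set.range X) := by
        rw [bddBelow_def]
        refine ⟨X a₀ - c 0, ?_⟩
        rintro w ⟨a, rfl⟩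
        have := hosc a₀ a
        linarith
      set I : ℝ := sInf (Set.range X) with hI
      have hlo : ∀ a, I ≤ X a := fun a => csInf_le hbdd ⟨a, rfl⟩
      have hhi : ∀ a, X a ≤ I + c 0 := by
        intro a
        have hne : (Set.range X).Nonempty := ⟨X a₀, a₀, rfl⟩
        have : X a - c 0 ≤ I := by
          apply le_csInf hne
          rintro w ⟨a', rfl⟩
          have := hosc a a'
          linarith
        linarith
      have := hoeffding_lemma σ (hXzmeas z) (a := I) (b := I + c 0)
        (fun a => ⟨hlo a, hhi a⟩) s
      have harg : s * ∫ a, X a ∂σ + s ^ 2 * (I + c 0 - I) ^ 2 / 8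
          = s * g z + s ^ 2 * c 0 ^ 2 / 8 := by
        simp only [hg, hX]; ring
      rw [harg] at this
      exact this
    -- main chain
    have main : ∫ x, Real.exp (s * f x) ∂P =
        ∫ z, ∫ a, Real.exp (s * F (a, z)) ∂σ ∂τ := by
      rw [← transport (fun x => Real.exp (s * f x))]
      exact integral_prod_symm (fun q => Real.exp (s * F q)) hexpint
    rw [main]
    have hinner_int : Integrable (fun z => ∫ a, Real.exp (s * F (a, z)) ∂σ) τ :=
      hexpint.integral_prod_right
    have hrhs_int : Integrable (fun z => Real.exp (s * g z + s ^ 2 * c 0 ^ 2 / 8)) τ := by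
      apply my_integrable_of_bounded
        ((Real.measurable_exp.comp ((hgmeas.const_mul s).add_const _)).aestronglyMeasurable)
        (C := Real.exp (|s| * B + s ^ 2 * c 0 ^ 2 / 8))
      intro z
      simp only [Function.comp_apply]
      rw [abs_of_pos (Real.exp_pos _)]
      apply Real.exp_le_exp.2
      have : s * g z ≤ |s| * B := by
        calc s * g z ≤ |s * g z| := le_abs_self _
          _ = |s| * |g z| := abs_mul _ _
          _ ≤ |s| * B := mul_le_mul_of_nonneg_left (hgb z) (abs_nonneg s)
      linarith
    have step2 : ∫ z, ∫ a, Real.exp (s * F (a, z)) ∂σ ∂τ ≤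
        ∫ z, Real.exp (s * g z + s ^ 2 * c 0 ^ 2 / 8) ∂τ :=
      integral_mono hinner_int hrhs_int (fun z => hstep z)
    refine step2.trans ?_
    have step3 : ∫ z, Real.exp (s * g z + s ^ 2 * c 0 ^ 2 / 8) ∂τ =
        Real.exp (s ^ 2 * c 0 ^ 2 / 8) * ∫ z, Real.exp (s * g z) ∂τ := by
      simp_rw [Real.exp_add]
      rw [integral_mul_const]
      ring
    rw [step3]
    have hIH := ih ν' (fun j => hν _) g hgmeas c' hgbd s
    calc Real.exp (s ^ 2 * c 0 ^ 2 / 8) * ∫ z, Real.exp (s * g z) ∂τ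
        ≤ Real.exp (s ^ 2 * c 0 ^ 2 / 8) *
          Real.exp (s * ∫ z, g z ∂τ + s ^ 2 * (∑ j, c' j ^ 2) / 8) :=
          mul_le_mul_of_nonneg_left hIH (Real.exp_pos _).le
      _ = Real.exp (s * ∫ x, f x ∂P + s ^ 2 * (∑ k, c k ^ 2) / 8) := by
          rw [← Real.exp_add, hmean]
          congr 1
          have hsum : ∑ k, c k ^ 2 = c 0 ^ 2 + ∑ j, c' j ^ 2 :=
            Fin.sum_univ_succAbove (fun k => c k ^ 2) 0
          rw [hsum]
          ring


theorem stmt_19 {Ω A : Type*} [MeasurableSpace Ω] [MeasurableSpace A]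
    (μ : Measure Ω) [IsProbabilityMeasure μ] {N : ℕ}
    (u : Fin N → Ω → A) (hmeas : ∀ i, Measurable (u i))
    (hindep : iIndepFun u μ)
    (f : (Fin N → A) → ℝ) (hf : Measurable f)
    (c : Fin N → ℝ)
    (hbd : ∀ (k : Fin N) (x y : Fin N → A), (∀ j, j ≠ k → x j = y j) → |f x - f y| ≤ c k)
    (hint : Integrable (fun ω => f fun i => u i ω) μ)
    (t : ℝ) (ht : 0 ≤ t) :
    μ {ω | t ≤ |f (fun i => u i ω) - ∫ ω', f (fun i => u i ω') ∂μ|} ≤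
      ENNReal.ofReal (2 * Real.exp (-2 * t ^ 2 / ∑ k, c k ^ 2)) := by
  classical
  rcases eq_or_lt_of_le ht with rfl | htpos
  · -- t = 0 : RHS is at least 1
    have h0 : (-2 * (0:ℝ) ^ 2 / ∑ k, c k ^ 2) = 0 := by simp
    rw [h0, Real.exp_zero, mul_one]
    calc μ _ ≤ 1 := prob_le_one
      _ ≤ ENNReal.ofReal 2 := by
          rw [show (1 : ENNReal) = ENNReal.ofReal 1 by simp]
          exact ENNReal.ofReal_le_ofReal (by norm_num)
  · -- t > 0
    have hΩ : Nonempty Ω := by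
      rcases MeasureTheory.nonempty_of_measure_ne_zero
        (by simp : μ Set.univ ≠ 0) with ⟨ω₀, -⟩
      exact ⟨ω₀⟩
    obtain ⟨ω₀⟩ := hΩ
    set x₀ : Fin N → A := fun i => u i ω₀ with hx₀
    set V : ℝ := ∑ k, c k ^ 2 with hV
    have hVnonneg : 0 ≤ V := Finset.sum_nonneg fun k _ => sq_nonneg _
    by_cases hV0 : V = 0
    · -- degenerate : f is constant
      have hck : ∀ k, c k = 0 := by
        intro k
        have h1 : ∀ k ∈ Finset.univ, (0:ℝ) ≤ c k ^ 2 := fun k _ => sq_nonneg _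
        have h2 := (Finset.sum_eq_zero_iff_of_nonneg h1).1 hV0 k (Finset.mem_univ k)
        exact pow_eq_zero_iff (by norm_num) |>.1 h2
      have hfconst : ∀ x y : Fin N → A, f x = f y := by
        intro x y
        have h1 := abs_sub_le_sum_of_bd hbd x y
        rw [Finset.sum_eq_zero (fun k _ => hck k)] at h1
        have := abs_nonneg (f x - f y)
        have h2 : |f x - f y| = 0 := le_antisymm h1 this
        rw [abs_eq_zero, sub_eq_zero] at h2
        exact h2
      have hempty : {ω | t ≤ |f (fun i => u i ω) - ∫ ω', f (fun i => u i ω') ∂μ|} = ∅ := by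
        apply Set.eq_empty_iff_forall_notMem.2
        intro ω hω
        simp only [Set.mem_setOf_eq] at hω
        have hconst : (fun ω' => f (fun i => u i ω')) = fun _ => f (fun i => u i ω) :=
          funext fun ω' => hfconst _ _
        rw [hconst, integral_const] at hω
        simp only [probReal_univ, one_smul, sub_self, abs_zero] at hω
        linarith
      rw [hempty]
      simp
    · have hVpos : 0 < V := lt_of_le_of_ne hVnonneg (Ne.symm hV0)
      set p : Ω → Fin N → A := fun ω i => u i ω with hp
      have hπ : Measurable p := measurable_pi_lambda _ hmeas
      set ν : Measure (Fin N → A) := μ.map p with hν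
      haveI : IsProbabilityMeasure ν := Measure.isProbabilityMeasure_map hπ.aemeasurable
      haveI : ∀ i, IsProbabilityMeasure (μ.map (u i)) := fun i =>
        Measure.isProbabilityMeasure_map (hmeas i).aemeasurable
      -- independence gives the product structure
      have hpi : Measure.pi (fun i => μ.map (u i)) = ν := by
        apply MeasureTheory.Measure.pi_eq
        intro s hs
        rw [hν, Measure.map_apply hπ (MeasurableSet.univ_pi hs)]
        have hpre : p ⁻¹' Set.pi Set.univ s = ⋂ i ∈ Finset.univ, u i ⁻¹' s i := by
          ext ω
          simp [Set.mem_pi, hp]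
        rw [hpre, hindep.measure_inter_preimage_eq_mul Finset.univ (fun i _ => hs i)]
        exact Finset.prod_congr rfl fun i _ =>
          (Measure.map_apply (hmeas i) (hs i)).symm
      -- mgf bound transported to ν
      have hmgf : ∀ l : ℝ, ∫ x, Real.exp (l * f x) ∂ν ≤
          Real.exp (l * ∫ x, f x ∂ν + l ^ 2 * V / 8) := by
        intro l
        rw [← hpi]
        exact mcdiarmid_mgf N (fun i => μ.map (u i)) (fun i => inferInstance) f hf c hbd l
      -- mean over ν equals mean over μ
      set m : ℝ := ∫ ω', f (fun i => u i ω') ∂μ with hm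
      have hmm : ∫ x, f x ∂ν = m := by
        rw [hν, integral_map hπ.aemeasurable hf.aestronglyMeasurable]
      -- boundedness of f
      have hfb : ∀ x, |f x| ≤ |f x₀| + ∑ k, c k := by
        intro x
        have h1 := abs_sub_le_sum_of_bd hbd x x₀
        have h2 := abs_sub_abs_le_abs_sub (f x) (f x₀)
        linarith
      set B : ℝ := |f x₀| + ∑ k, c k with hB
      -- map the event
      have hsm : MeasurableSet {x : Fin N → A | t ≤ |f x - m|} :=
        measurableSet_le measurable_const ((hf.sub measurable_const).abs)
      have hmap : μ {ω | t ≤ |f (fun i => u i ω) - m|} = ν {x | t ≤ |f x - m|} := by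
        rw [hν, Measure.map_apply hπ hsm]
        rfl
      rw [show {ω | t ≤ |f (fun i => u i ω) - ∫ ω', f (fun i => u i ω') ∂μ|}
          = {ω | t ≤ |f (fun i => u i ω) - m|} from rfl, hmap]
      -- split two tails
      have hsub : {x : Fin N → A | t ≤ |f x - m|} ⊆
          {x | t ≤ f x - m} ∪ {x | t ≤ m - f x} := by
        intro x hx
        simp only [Set.mem_setOf_eq] at hx
        rcases le_abs.1 hx with h | h
        · exact Or.inl h
        · exact Or.inr (by simpa [neg_sub] using h)
      set l : ℝ := 4 * t / V with hl
      have hl0 : 0 ≤ l := by positivity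
      have hexparg : -l * t + l ^ 2 * V / 8 = -2 * t ^ 2 / V := by
        rw [hl]; field_simp; ring
      -- integrability helpers
      have hintexp : ∀ (r : ℝ) (b : ℝ), Integrable (fun x => Real.exp (r * (f x - b))) ν := by
        intro r b
        apply my_integrable_of_bounded
          ((Real.measurable_exp.comp ((hf.sub measurable_const).const_mul r)).aestronglyMeasurable)
          (C := Real.exp (|r| * (B + |b|)))
        intro x
        simp only [Function.comp_apply]
        rw [abs_of_pos (Real.exp_pos _)]
        apply Real.exp_le_exp.2
        calc r * (f x - b) ≤ |r * (f x - b)| := le_abs_self _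
          _ = |r| * |f x - b| := abs_mul _ _
          _ ≤ |r| * (B + |b|) := by
              apply mul_le_mul_of_nonneg_left _ (abs_nonneg r)
              calc |f x - b| ≤ |f x| + |b| := abs_sub _ _
                _ ≤ B + |b| := by linarith [hfb x]
      -- upper tail
      have htail : ∀ X : (Fin N → A) → ℝ, Measurable X →
          (∀ x, X x = f x - m ∨ X x = m - f x) →
          (∫ x, Real.exp (l * X x) ∂ν ≤ Real.exp (l ^ 2 * V / 8)) →
          ν {x | t ≤ X x} ≤ ENNReal.ofReal (Real.exp (-2 * t ^ 2 / V)) := by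
        intro X hX hXcases hXmgf
        have hXint : Integrable (fun x => Real.exp (l * X x)) ν := by
          apply my_integrable_of_bounded
            ((Real.measurable_exp.comp (hX.const_mul l)).aestronglyMeasurable)
            (C := Real.exp (|l| * (B + |m|)))
          intro x
          simp only [Function.comp_apply]
          rw [abs_of_pos (Real.exp_pos _)]
          apply Real.exp_le_exp.2
          have hXb : |X x| ≤ B + |m| := by
            rcases hXcases x with h | h <;> rw [h]
            · calc |f x - m| ≤ |f x| + |m| := abs_sub _ _
                _ ≤ B + |m| := by linarith [hfb x]
            · calc |m - f x| = |f x - m| := abs_sub_comm _ _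
                _ ≤ |f x| + |m| := abs_sub _ _
                _ ≤ B + |m| := by linarith [hfb x]
          calc l * X x ≤ |l * X x| := le_abs_self _
            _ = |l| * |X x| := abs_mul _ _
            _ ≤ |l| * (B + |m|) := mul_le_mul_of_nonneg_left hXb (abs_nonneg l)
        have hch := measure_ge_le_exp_mul_mgf (μ := ν) (X := X) t hl0 hXint
        have hmgfle : mgf X ν l ≤ Real.exp (l ^ 2 * V / 8) := hXmgf
        have h1 : (ν {x | t ≤ X x}).toReal ≤ Real.exp (-2 * t ^ 2 / V) := by
          calc (ν {x | t ≤ X x}).toReal ≤ Real.exp (-l * t) * mgf X ν l := hch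
            _ ≤ Real.exp (-l * t) * Real.exp (l ^ 2 * V / 8) :=
                mul_le_mul_of_nonneg_left hmgfle (Real.exp_pos _).le
            _ = Real.exp (-2 * t ^ 2 / V) := by rw [← Real.exp_add, ← hexparg]
        calc ν {x | t ≤ X x} = ENNReal.ofReal ((ν {x | t ≤ X x}).toReal) :=
              (ENNReal.ofReal_toReal (measure_ne_top ν _)).symm
          _ ≤ ENNReal.ofReal (Real.exp (-2 * t ^ 2 / V)) := ENNReal.ofReal_le_ofReal h1
      -- mgf bounds for the two tails
      have hmgfP : ∫ x, Real.exp (l * (f x - m)) ∂ν ≤ Real.exp (l ^ 2 * V / 8) := by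
        have heq : ∀ x : Fin N → A, Real.exp (l * (f x - m))
            = Real.exp (l * f x) * Real.exp (-(l * m)) := by
          intro x; rw [← Real.exp_add]; ring_nf
        calc ∫ x, Real.exp (l * (f x - m)) ∂ν
            = (∫ x, Real.exp (l * f x) ∂ν) * Real.exp (-(l * m)) := by
              simp_rw [heq]; rw [integral_mul_const]
          _ ≤ Real.exp (l * ∫ x, f x ∂ν + l ^ 2 * V / 8) * Real.exp (-(l * m)) :=
              mul_le_mul_of_nonneg_right (hmgf l) (Real.exp_pos _).le
          _ = Real.exp (l ^ 2 * V / 8) := by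
              rw [hmm, ← Real.exp_add]; ring_nf
      have hmgfM : ∫ x, Real.exp (l * (m - f x)) ∂ν ≤ Real.exp (l ^ 2 * V / 8) := by
        have heq : ∀ x : Fin N → A, Real.exp (l * (m - f x))
            = Real.exp ((-l) * f x) * Real.exp (l * m) := by
          intro x; rw [← Real.exp_add]; ring_nf
        calc ∫ x, Real.exp (l * (m - f x)) ∂ν
            = (∫ x, Real.exp ((-l) * f x) ∂ν) * Real.exp (l * m) := by
              simp_rw [heq]; rw [integral_mul_const]
          _ ≤ Real.exp ((-l) * ∫ x, f x ∂ν + (-l) ^ 2 * V / 8) * Real.exp (l * m) :=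
              mul_le_mul_of_nonneg_right (hmgf (-l)) (Real.exp_pos _).le
          _ = Real.exp (l ^ 2 * V / 8) := by
              rw [hmm, ← Real.exp_add]; ring_nf
      -- combine
      have hP2 := htail (fun x => f x - m) (hf.sub measurable_const)
        (fun x => Or.inl rfl) hmgfP
      have hM2 := htail (fun x => m - f x) (measurable_const.sub hf)
        (fun x => Or.inr rfl) hmgfM
      calc ν {x | t ≤ |f x - m|}
          ≤ ν ({x | t ≤ f x - m} ∪ {x | t ≤ m - f x}) := measure_mono hsub
        _ ≤ ν {x | t ≤ f x - m} + ν {x | t ≤ m - f x} := measure_union_le _ _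
        _ ≤ ENNReal.ofReal (Real.exp (-2 * t ^ 2 / V)) +
            ENNReal.ofReal (Real.exp (-2 * t ^ 2 / V)) := add_le_add hP2 hM2
        _ = ENNReal.ofReal (2 * Real.exp (-2 * t ^ 2 / V)) := by
            rw [← ENNReal.ofReal_add (Real.exp_pos _).le (Real.exp_pos _).le]
            ring_nf
end
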